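/- arXiv:1506.01644 — 2 statements merged into one kernel-verified Lean document; each statement's English description precedes it below -/
import Mathlib

section
/- Let δ ∈ (0,1), θ > 0, and p ∈ [0,1]. Then 2∫_0^1 [1 − (1 − pθ r^{2/δ}/(1+θ r^{2/δ}))²]·r^{−3} dr = 2p·A(θ) − p²·B(θ), where A(θ) = θδ·∫_0^1 s^{−δ}/(1+θs) ds and B(θ) = θ²δ·∫_0^1 s^{1−δ}/(1+θs)² ds. (Hence the second moment of the conditional success probability of a Poisson cellular network with base-station activity probability p satisfies M₂(p)^{−1} = 1 + 2p·A(θ) − p²·B(θ).) -/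
open Real MeasureTheory Set

/-!
Substitute `s = r ^ (2 / δ)`: then `ds = (2 / δ) r ^ (2 / δ - 1) dr` and `s ^ (-δ) = r ^ (-2)`,
so after expanding `1 - (1 - x) ^ 2 = 2 x - x ^ 2` the left-hand side becomes
`δ ∫₀¹ (2 p θ s ^ (-δ) / (1 + θ s) - p² θ² s ^ (1 - δ) / (1 + θ s) ²) ds`.
Both pieces are integrable because `-δ` and `1 - δ` exceed `-1`, so the integral splits.
-/

theorem image_rpow_Ioo_zero_one {c : ℝ} (hc : 0 < c) :
    (fun r : ℝ => r ^ c) '' Ioo 0 1 = Ioo 0 1 := by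
  rw [(continuous_rpow_const hc.le).continuousOn.image_Ioo_of_strictMonoOn zero_le_one
    ((strictMonoOn_rpow_Ici_of_exponent_pos hc).mono Icc_subset_Ici_self)]
  simp [zero_rpow hc.ne']

theorem integral_comp_rpow_Ioo_zero_one {E : Type*} [NormedAddCommGroup E] [NormedSpace ℝ E]
    (g : ℝ → E) {c : ℝ} (hc : 0 < c) :
    ∫ r in Ioo 0 1, (c * r ^ (c - 1)) • g (r ^ c) = ∫ s in Ioo 0 1, g s := by
  have hsubst := integral_image_eq_integral_abs_deriv_smul (measurableSet_Ioo (a := 0) (b := 1))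
    (fun r hr => (hasDerivAt_rpow_const (Or.inl hr.1.ne')).hasDerivWithinAt)
    ((rpow_left_injOn hc.ne').mono fun r hr => le_of_lt (mem_Ioo.mp hr).1) g
  rw [image_rpow_Ioo_zero_one hc] at hsubst
  rw [hsubst]
  refine setIntegral_congr_fun measurableSet_Ioo fun r hr => ?_
  rw [abs_of_pos (by have := hr.1; positivity)]

theorem integrableOn_rpow_div_one_add_mul_pow {a θ : ℝ} (ha : -1 < a) (hθ : 0 ≤ θ) (n : ℕ) :
    IntegrableOn (fun s : ℝ => s ^ a / (1 + θ * s) ^ n) (Ioo 0 1) := by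
  have hrpow : IntegrableOn (fun s : ℝ => s ^ a) (Ioo 0 1) :=
    (intervalIntegral.intervalIntegrable_rpow' ha).1.mono_set Ioo_subset_Ioc_self
  refine hrpow.mono' (Measurable.aestronglyMeasurable (by fun_prop)) ?_
  filter_upwards [ae_restrict_mem measurableSet_Ioo] with s ⟨hs0, _⟩
  have hsa : 0 ≤ s ^ a := rpow_nonneg hs0.le a
  rw [norm_of_nonneg (by positivity)]
  exact div_le_self hsa (one_le_pow₀ (by nlinarith))

theorem one_sub_one_sub_sq_mul_rpow_neg_three {δ θ p r : ℝ} (hδ : 0 < δ) (hθ : 0 ≤ θ)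
    (hr : 0 < r) :
    (1 - (1 - p * θ * r ^ (2 / δ) / (1 + θ * r ^ (2 / δ))) ^ 2) * r ^ (-3 : ℝ) =
      (2 / δ * r ^ (2 / δ - 1)) *
        (δ / 2 * (2 * p * θ * ((r ^ (2 / δ)) ^ (-δ) / (1 + θ * r ^ (2 / δ))) -
          p ^ 2 * θ ^ 2 * ((r ^ (2 / δ)) ^ (1 - δ) / (1 + θ * r ^ (2 / δ)) ^ 2))) := by
  set u := r ^ (2 / δ) with hu
  have hjac : 2 / δ * r ^ (2 / δ - 1) * (δ / 2) = u * r ^ (-1 : ℝ) := by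
    rw [hu, ← rpow_add hr]
    field_simp
    ring_nf
  have hpow_neg : r ^ (-1 : ℝ) * u ^ (-δ) = r ^ (-3 : ℝ) := by
    rw [hu, ← rpow_mul hr.le, ← rpow_add hr]
    congr 1
    field_simp
    ring
  have hpow_one_sub : r ^ (-1 : ℝ) * u ^ (1 - δ) = u * r ^ (-3 : ℝ) := by
    rw [hu, ← rpow_mul hr.le, ← rpow_add hr, ← rpow_add hr]
    congr 1
    field_simp
    ring
  have hden : 1 + θ * u ≠ 0 := by positivity
  calc (1 - (1 - p * θ * u / (1 + θ * u)) ^ 2) * r ^ (-3 : ℝ)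
      = u * (2 * p * θ * (r ^ (-3 : ℝ) / (1 + θ * u)) -
          p ^ 2 * θ ^ 2 * (u * r ^ (-3 : ℝ) / (1 + θ * u) ^ 2)) := by
        field_simp
        ring
    _ = _ := by
        rw [← hpow_one_sub, ← hpow_neg]
        linear_combination (2 * p * θ * (u ^ (-δ) / (1 + θ * u)) -
          p ^ 2 * θ ^ 2 * (u ^ (1 - δ) / (1 + θ * u) ^ 2)) * hjac.symm

theorem cellular_second_moment_identity_general (δ θ p : ℝ) (hδ : δ ∈ Set.Ioo (0:ℝ) 1)
    (hθ : 0 < θ)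
    (A B : ℝ → ℝ)
    (hA : ∀ ϑ : ℝ, A ϑ = ϑ * δ * ∫ s in Set.Ioo (0:ℝ) 1, s ^ (-δ) / (1 + ϑ * s))
    (hB : ∀ ϑ : ℝ, B ϑ = ϑ ^ 2 * δ * ∫ s in Set.Ioo (0:ℝ) 1, s ^ (1 - δ) / (1 + ϑ * s) ^ 2) :
    2 * ∫ r in Set.Ioo (0:ℝ) 1,
        (1 - (1 - p * θ * r ^ (2 / δ) / (1 + θ * r ^ (2 / δ))) ^ 2) * r ^ (-3 : ℝ) =
      2 * p * A θ - p ^ 2 * B θ := by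
  obtain ⟨hδ0, hδ1⟩ := hδ
  have hIA : IntegrableOn (fun s : ℝ => s ^ (-δ) / (1 + θ * s)) (Set.Ioo 0 1) := by
    simpa using integrableOn_rpow_div_one_add_mul_pow (by linarith) hθ.le 1
  have hIB := integrableOn_rpow_div_one_add_mul_pow (a := 1 - δ) (by linarith) hθ.le 2
  calc 2 * ∫ r in Set.Ioo (0:ℝ) 1,
        (1 - (1 - p * θ * r ^ (2 / δ) / (1 + θ * r ^ (2 / δ))) ^ 2) * r ^ (-3 : ℝ)
      = 2 * ∫ s in Set.Ioo (0:ℝ) 1, δ / 2 * (2 * p * θ * (s ^ (-δ) / (1 + θ * s)) -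
          p ^ 2 * θ ^ 2 * (s ^ (1 - δ) / (1 + θ * s) ^ 2)) := by
        conv_rhs => rw [← integral_comp_rpow_Ioo_zero_one _ (by positivity : 0 < 2 / δ)]
        congr 1
        refine setIntegral_congr_fun measurableSet_Ioo fun r hr => ?_
        exact one_sub_one_sub_sq_mul_rpow_neg_three hδ0 hθ.le hr.1
    _ = 2 * p * A θ - p ^ 2 * B θ := by
        rw [integral_const_mul, integral_sub (hIA.const_mul _) (hIB.const_mul _),
          integral_const_mul, integral_const_mul, hA, hB]
        ring

/-- For `δ ∈ (0,1)`, `θ > 0`, `p ∈ [0,1]`: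
`2∫_0^1 (1 - (1 - pθr^{2/δ}/(1+θr^{2/δ}))²) r^{-3} dr = 2p A(θ) - p² B(θ)`, where
`A(θ) = θδ ∫_0^1 s^{-δ}/(1+θs) ds` and `B(θ) = θ²δ ∫_0^1 s^{1-δ}/(1+θs)² ds`
(so `M₂(p)⁻¹ = 1 + 2p A(θ) - p² B(θ)`). -/
theorem cellular_second_moment_identity (δ θ p : ℝ) (hδ : δ ∈ Set.Ioo (0:ℝ) 1)
    (hθ : 0 < θ) (hp : p ∈ Set.Icc (0:ℝ) 1)
    (A B : ℝ → ℝ)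
    (hA : ∀ ϑ : ℝ, A ϑ = ϑ * δ * ∫ s in Set.Ioo (0:ℝ) 1, s ^ (-δ) / (1 + ϑ * s))
    (hB : ∀ ϑ : ℝ, B ϑ = ϑ ^ 2 * δ * ∫ s in Set.Ioo (0:ℝ) 1, s ^ (1 - δ) / (1 + ϑ * s) ^ 2) :
    2 * ∫ r in Set.Ioo (0:ℝ) 1,
        (1 - (1 - p * θ * r ^ (2 / δ) / (1 + θ * r ^ (2 / δ))) ^ 2) * r ^ (-3 : ℝ) =
      2 * p * A θ - p ^ 2 * B θ :=
  cellular_second_moment_identity_general δ θ p hδ hθ A B hA hB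
end

section
/- Let δ ∈ (0,1), let t > 0 be fixed, define A(θ) = θδ·∫_0^1 s^{−δ}/(1+θs) ds and B(θ) = θ²δ·∫_0^1 s^{1−δ}/(1+θs)² ds, and for p ∈ (0,1] set θ_p = (t/p)^{1/δ}. Then lim_{p→0⁺} [ 1/(1 + 2p·A(θ_p) − p²·B(θ_p)) − 1/(1 + p·A(θ_p))² ] = sinc δ/(2t + sinc δ) − (sinc δ/(t + sinc δ))², where sinc δ = sin(πδ)/(πδ). (This is the limit of the variance M₂ − M₁² of the conditional success probability in a Poisson cellular network as the base-station activity probability p → 0 with pθ^δ = t held constant; in contrast to the bipolar case, this limit is strictly positive for all t > 0.) -/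
/-!
Substituting `u = θ s` gives `p A(θ_p) = t δ ∫₀^{θ_p} u^{-δ}/(1+u) du` and
`p² B(θ_p) = p · t δ ∫₀^{θ_p} u^{1-δ}/(1+u)² du`, since `θ_p^δ = t/p`. As `p → 0⁺`, `θ_p → ∞` and
both integrals converge; the substitution `u = y/(1-y)` turns the first limit into the Beta
integral `Β(1-δ, δ) = Γ(1-δ) Γ(δ) = π / sin (πδ)`. Hence `p A(θ_p) → t / sinc δ` and `p² B(θ_p) → 0`, and the limit of the
variance follows by continuity.
-/

open Real MeasureTheory Filter Set Topology

theorem ofReal_rpow_mul_one_sub_rpow {a b y : ℝ} (hy₀ : 0 ≤ y) (hy₁ : y ≤ 1) :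
    ((y ^ (a - 1) * (1 - y) ^ (b - 1) : ℝ) : ℂ) =
      (y : ℂ) ^ ((a : ℂ) - 1) * (1 - (y : ℂ)) ^ ((b : ℂ) - 1) := by
  rw [Complex.ofReal_mul, Complex.ofReal_cpow hy₀, Complex.ofReal_cpow (by linarith)]
  push_cast
  rfl

theorem integrableOn_rpow_mul_one_sub_rpow {a b : ℝ} (ha : 0 < a) (hb : 0 < b) :
    IntegrableOn (fun y : ℝ => y ^ (a - 1) * (1 - y) ^ (b - 1)) (Ioo 0 1) := by
  have hβ := Complex.betaIntegral_convergent (u := a) (v := b) (by simpa) (by simpa)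
  rw [intervalIntegrable_iff_integrableOn_Ioo_of_le zero_le_one] at hβ
  refine IntegrableOn.congr_fun hβ.norm (fun y hy => ?_) measurableSet_Ioo
  rw [← ofReal_rpow_mul_one_sub_rpow hy.1.le hy.2.le, Complex.norm_real, norm_of_nonneg]
  exact mul_nonneg (rpow_nonneg hy.1.le _) (rpow_nonneg (by linarith [hy.2]) _)

theorem integral_rpow_mul_one_sub_rpow {a b : ℝ} (ha : 0 < a) (hb : 0 < b) :
    ∫ y in Ioo (0 : ℝ) 1, y ^ (a - 1) * (1 - y) ^ (b - 1) = ProbabilityTheory.beta a b := by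
  apply Complex.ofReal_injective
  rw [ProbabilityTheory.beta, ← integral_complex_ofReal,
    setIntegral_congr_fun measurableSet_Ioo fun y hy =>
      ofReal_rpow_mul_one_sub_rpow hy.1.le hy.2.le,
    ← integral_Ioc_eq_integral_Ioo, ← intervalIntegral.integral_of_le zero_le_one,
    ← Complex.betaIntegral, Complex.betaIntegral_eq_Gamma_mul_div _ _ (by simpa) (by simpa)]
  simp only [← Complex.ofReal_add, Complex.Gamma_ofReal, Complex.ofReal_mul, Complex.ofReal_div]

theorem hasDerivAt_div_one_sub {y : ℝ} (hy : y ≠ 1) :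
    HasDerivAt (fun y : ℝ => y / (1 - y)) ((1 - y) ^ 2)⁻¹ y := by
  have h : (1 : ℝ) - y ≠ 0 := sub_ne_zero.2 (Ne.symm hy)
  refine ((hasDerivAt_id' y).fun_div ((hasDerivAt_id' y).const_sub 1) h).congr_deriv ?_
  field_simp
  ring

theorem injOn_div_one_sub : InjOn (fun y : ℝ => y / (1 - y)) (Iio 1) := by
  intro x hx y hy h
  have hx' : (1 : ℝ) - x ≠ 0 := sub_ne_zero.2 (ne_of_gt hx)
  have hy' : (1 : ℝ) - y ≠ 0 := sub_ne_zero.2 (ne_of_gt hy)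
  simp only [div_eq_div_iff hx' hy'] at h
  linarith

theorem image_div_one_sub_Ioo : (fun y : ℝ => y / (1 - y)) '' Ioo 0 1 = Ioi 0 := by
  ext x
  constructor
  · rintro ⟨y, ⟨hy₀, hy₁⟩, rfl⟩
    exact div_pos hy₀ (by linarith)
  · intro (hx : 0 < x)
    refine ⟨x / (1 + x), ⟨by positivity, (div_lt_one (by positivity)).2 (by linarith)⟩, ?_⟩
    field_simp
    ring

theorem integrableOn_Ioi_iff_integrableOn_Ioo_div_one_sub (g : ℝ → ℝ) :
    IntegrableOn g (Ioi 0) ↔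
      IntegrableOn (fun y => ((1 - y) ^ 2)⁻¹ * g (y / (1 - y))) (Ioo 0 1) := by
  rw [← image_div_one_sub_Ioo, integrableOn_image_iff_integrableOn_abs_deriv_smul measurableSet_Ioo
    (fun y hy => (hasDerivAt_div_one_sub hy.2.ne).hasDerivWithinAt)
    (injOn_div_one_sub.mono fun y hy => hy.2)]
  simp only [abs_inv, abs_sq, smul_eq_mul]

theorem integral_Ioi_eq_integral_Ioo_div_one_sub (g : ℝ → ℝ) :
    ∫ x in Ioi 0, g x = ∫ y in Ioo 0 1, ((1 - y) ^ 2)⁻¹ * g (y / (1 - y)) := by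
  rw [← image_div_one_sub_Ioo, integral_image_eq_integral_abs_deriv_smul measurableSet_Ioo
    (fun y hy => (hasDerivAt_div_one_sub hy.2.ne).hasDerivWithinAt)
    (injOn_div_one_sub.mono fun y hy => hy.2)]
  simp only [abs_inv, abs_sq, smul_eq_mul]

theorem rpow_div_one_add_rpow_comp_div_one_sub {a b y : ℝ} (hy₀ : 0 ≤ y) (hy₁ : y < 1) :
    ((1 - y) ^ 2)⁻¹ * ((y / (1 - y)) ^ (a - 1) / (1 + y / (1 - y)) ^ (a + b)) =
      y ^ (a - 1) * (1 - y) ^ (b - 1) := by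
  have hc : 0 < 1 - y := by linarith
  have h_add : 1 + y / (1 - y) = (1 - y)⁻¹ := by field_simp; ring
  have h_pow : (1 - y) ^ (a + b) = (1 - y) ^ 2 * (1 - y) ^ (a - 1) * (1 - y) ^ (b - 1) := by
    rw [← rpow_two, ← rpow_add hc, ← rpow_add hc]
    ring_nf
  have h_pos : 0 < (1 - y) ^ (a - 1) := rpow_pos_of_pos hc _
  rw [h_add, div_rpow hy₀ hc.le, inv_rpow hc.le, h_pow]
  field_simp

theorem integrableOn_rpow_div_one_add_rpow {a b : ℝ} (ha : 0 < a) (hb : 0 < b) :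
    IntegrableOn (fun x : ℝ => x ^ (a - 1) / (1 + x) ^ (a + b)) (Ioi 0) := by
  rw [integrableOn_Ioi_iff_integrableOn_Ioo_div_one_sub]
  exact (integrableOn_rpow_mul_one_sub_rpow ha hb).congr_fun
    (fun y hy => (rpow_div_one_add_rpow_comp_div_one_sub hy.1.le hy.2).symm) measurableSet_Ioo

theorem integral_rpow_div_one_add_rpow {a b : ℝ} (ha : 0 < a) (hb : 0 < b) :
    ∫ x in Ioi (0 : ℝ), x ^ (a - 1) / (1 + x) ^ (a + b) = ProbabilityTheory.beta a b := by
  rw [integral_Ioi_eq_integral_Ioo_div_one_sub, ← integral_rpow_mul_one_sub_rpow ha hb]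
  exact setIntegral_congr_fun measurableSet_Ioo
    fun y hy => rpow_div_one_add_rpow_comp_div_one_sub hy.1.le hy.2

theorem beta_one_sub_left (a : ℝ) : ProbabilityTheory.beta (1 - a) a = π / sin (π * a) := by
  rw [ProbabilityTheory.beta, sub_add_cancel, Gamma_one, div_one, mul_comm,
    Gamma_mul_Gamma_one_sub]

theorem integrableOn_rpow_neg_div_one_add {δ : ℝ} (hδ₀ : 0 < δ) (hδ₁ : δ < 1) :
    IntegrableOn (fun u : ℝ => u ^ (-δ) / (1 + u)) (Ioi 0) := by
  simpa only [sub_sub_cancel_left, sub_add_cancel, rpow_one] using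
    integrableOn_rpow_div_one_add_rpow (sub_pos.2 hδ₁) hδ₀

theorem integral_rpow_neg_div_one_add {δ : ℝ} (hδ₀ : 0 < δ) (hδ₁ : δ < 1) :
    ∫ u in Ioi (0 : ℝ), u ^ (-δ) / (1 + u) = π / sin (π * δ) := by
  simpa only [sub_sub_cancel_left, sub_add_cancel, rpow_one, beta_one_sub_left] using
    integral_rpow_div_one_add_rpow (sub_pos.2 hδ₁) hδ₀

theorem integrableOn_rpow_one_sub_div_one_add_sq {δ : ℝ} (hδ₀ : 0 < δ) (hδ₁ : δ < 2) :
    IntegrableOn (fun u : ℝ => u ^ (1 - δ) / (1 + u) ^ 2) (Ioi 0) := by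
  convert integrableOn_rpow_div_one_add_rpow (sub_pos.2 hδ₁) hδ₀ using 3 with u
  · ring_nf
  · rw [sub_add_cancel, rpow_two]

theorem integral_Ioo_rpow_div_comp_mul_left (c : ℝ) (h : ℝ → ℝ) {θ : ℝ} (hθ : 0 < θ) :
    ∫ s in Ioo (0 : ℝ) 1, s ^ c / h (θ * s) = θ ^ (-c - 1) * ∫ u in (0 : ℝ)..θ, u ^ c / h u := by
  have hs : ∀ s ∈ Ioo (0 : ℝ) 1, s ^ c / h (θ * s) = θ ^ (-c) * ((θ * s) ^ c / h (θ * s)) := by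
    intro s hs
    rw [mul_rpow hθ.le hs.1.le, ← mul_div_assoc, ← mul_assoc, ← rpow_add hθ, neg_add_cancel,
      rpow_zero, one_mul]
  rw [setIntegral_congr_fun measurableSet_Ioo hs, integral_const_mul,
    ← integral_Ioc_eq_integral_Ioo, ← intervalIntegral.integral_of_le zero_le_one,
    intervalIntegral.integral_comp_mul_left (fun u => u ^ c / h u) hθ.ne', mul_zero, mul_one,
    smul_eq_mul, ← mul_assoc, rpow_sub_one hθ.ne', div_eq_mul_inv]

theorem tendsto_div_rpow_nhdsGT_zero_atTop {t r : ℝ} (ht : 0 < t) (hr : 0 < r) :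
    Tendsto (fun p : ℝ => (t / p) ^ r) (𝓝[>] 0) atTop := by
  simpa only [div_eq_mul_inv, Function.comp_def] using
    (tendsto_rpow_atTop hr).comp (tendsto_inv_nhdsGT_zero.const_mul_atTop ht)

theorem mul_integral_Ioo_rpow_neg_div_one_add_mul (δ : ℝ) {θ : ℝ} (hθ : 0 < θ) :
    θ * δ * ∫ s in Ioo (0 : ℝ) 1, s ^ (-δ) / (1 + θ * s) =
      δ * θ ^ δ * ∫ u in (0 : ℝ)..θ, u ^ (-δ) / (1 + u) := by
  rw [integral_Ioo_rpow_div_comp_mul_left (-δ) (fun u => 1 + u) hθ, neg_neg,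
    rpow_sub_one hθ.ne']
  field_simp

theorem sq_mul_integral_Ioo_rpow_one_sub_div_one_add_mul_sq (δ : ℝ) {θ : ℝ} (hθ : 0 < θ) :
    θ ^ 2 * δ * ∫ s in Ioo (0 : ℝ) 1, s ^ (1 - δ) / (1 + θ * s) ^ 2 =
      δ * θ ^ δ * ∫ u in (0 : ℝ)..θ, u ^ (1 - δ) / (1 + u) ^ 2 := by
  rw [integral_Ioo_rpow_div_comp_mul_left (1 - δ) (fun u => (1 + u) ^ 2) hθ,
    show -(1 - δ) - 1 = δ - 2 by ring, rpow_sub hθ, rpow_two]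
  field_simp

theorem tendsto_variance_of_tendsto {α : Type*} {l : Filter α} {x y : α → ℝ} {t S : ℝ}
    (ht : 0 ≤ t) (hS : 0 < S) (hx : Tendsto x l (𝓝 (t / S))) (hy : Tendsto y l (𝓝 0)) :
    Tendsto (fun a => (1 + 2 * x a - y a)⁻¹ - ((1 + x a) ^ 2)⁻¹) l
      (𝓝 (S / (2 * t + S) - (S / (t + S)) ^ 2)) := by
  have h₂ : 1 + 2 * (t / S) - 0 = (2 * t + S) / S := by
    field_simp
    ring
  have h₁ : (1 + t / S) ^ 2 = ((t + S) / S) ^ 2 := by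
    field_simp
    ring
  have hM₂ := ((tendsto_const_nhds.add (hx.const_mul 2)).sub hy).inv₀
    (by rw [h₂]; positivity : 1 + 2 * (t / S) - 0 ≠ 0)
  have hM₁ := ((tendsto_const_nhds.add hx).pow 2).inv₀
    (by rw [h₁]; positivity : (1 + t / S) ^ 2 ≠ 0)
  rw [h₂, inv_div] at hM₂
  rw [h₁, ← inv_pow, inv_div] at hM₁
  exact hM₂.sub hM₁

theorem rpow_one_div_rpow {x δ : ℝ} (hx : 0 ≤ x) (hδ : δ ≠ 0) : (x ^ (1 / δ)) ^ δ = x := by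
  rw [one_div, rpow_inv_rpow hx hδ]

theorem tendsto_mul_A {δ t : ℝ} {A : ℝ → ℝ} (hδ₀ : 0 < δ) (hδ₁ : δ < 1) (ht : 0 < t)
    (hA : ∀ θ : ℝ, A θ = θ * δ * ∫ s in Ioo (0 : ℝ) 1, s ^ (-δ) / (1 + θ * s)) :
    Tendsto (fun p : ℝ => p * A ((t / p) ^ (1 / δ))) (𝓝[>] 0)
      (𝓝 (t / (sin (π * δ) / (π * δ)))) := by
  have hsin : 0 < sin (π * δ) := sin_pos_of_pos_of_lt_pi (by positivity) (by nlinarith [pi_pos])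
  have hI := (intervalIntegral_tendsto_integral_Ioi 0 (integrableOn_rpow_neg_div_one_add hδ₀ hδ₁)
    (tendsto_div_rpow_nhdsGT_zero_atTop ht (one_div_pos.2 hδ₀))).const_mul (t * δ)
  rw [integral_rpow_neg_div_one_add hδ₀ hδ₁,
    show t * δ * (π / sin (π * δ)) = t / (sin (π * δ) / (π * δ)) by field_simp] at hI
  refine hI.congr' ?_
  filter_upwards [self_mem_nhdsWithin] with p (hp : 0 < p)
  rw [hA, mul_integral_Ioo_rpow_neg_div_one_add_mul δ (rpow_pos_of_pos (div_pos ht hp) _),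
    rpow_one_div_rpow (div_pos ht hp).le hδ₀.ne']
  field_simp

theorem tendsto_sq_mul_B {δ t : ℝ} {B : ℝ → ℝ} (hδ₀ : 0 < δ) (hδ₁ : δ < 2) (ht : 0 < t)
    (hB : ∀ θ : ℝ, B θ = θ ^ 2 * δ * ∫ s in Ioo (0 : ℝ) 1, s ^ (1 - δ) / (1 + θ * s) ^ 2) :
    Tendsto (fun p : ℝ => p ^ 2 * B ((t / p) ^ (1 / δ))) (𝓝[>] 0) (𝓝 0) := by
  have hI := (intervalIntegral_tendsto_integral_Ioi 0
    (integrableOn_rpow_one_sub_div_one_add_sq hδ₀ hδ₁)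
    (tendsto_div_rpow_nhdsGT_zero_atTop ht (one_div_pos.2 hδ₀))).const_mul (t * δ)
  have hpI := (tendsto_nhdsWithin_of_tendsto_nhds tendsto_id).mul hI
  rw [zero_mul] at hpI
  refine hpI.congr' ?_
  filter_upwards [self_mem_nhdsWithin] with p (hp : 0 < p)
  rw [id, hB,
    sq_mul_integral_Ioo_rpow_one_sub_div_one_add_mul_sq δ (rpow_pos_of_pos (div_pos ht hp) _),
    rpow_one_div_rpow (div_pos ht hp).le hδ₀.ne']
  field_simp

/-- For `δ ∈ (0,1)` and fixed `t > 0`, with `A(θ) = θδ ∫_0^1 s^{-δ}/(1+θs) ds`,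
`B(θ) = θ²δ ∫_0^1 s^{1-δ}/(1+θs)² ds`, and `θ_p = (t/p)^{1/δ}`, the variance
`M₂ - M₁² = 1/(1 + 2p A(θ_p) - p² B(θ_p)) - 1/(1 + p A(θ_p))²` satisfies
`lim_{p→0⁺} (M₂ - M₁²) = sinc δ/(2t + sinc δ) - (sinc δ/(t + sinc δ))²`
with `sinc δ = sin(πδ)/(πδ)`. -/
theorem cellular_variance_limit (δ t : ℝ) (hδ : δ ∈ Set.Ioo (0:ℝ) 1) (ht : 0 < t)
    (A B : ℝ → ℝ)
    (hA : ∀ θ : ℝ, A θ = θ * δ * ∫ s in Set.Ioo (0:ℝ) 1, s ^ (-δ) / (1 + θ * s))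
    (hB : ∀ θ : ℝ, B θ = θ ^ 2 * δ * ∫ s in Set.Ioo (0:ℝ) 1, s ^ (1 - δ) / (1 + θ * s) ^ 2) :
    Tendsto
      (fun p : ℝ =>
        1 / (1 + 2 * p * A ((t / p) ^ (1 / δ)) - p ^ 2 * B ((t / p) ^ (1 / δ))) -
          1 / (1 + p * A ((t / p) ^ (1 / δ))) ^ 2)
      (nhdsWithin 0 (Set.Ioi 0))
      (nhds (Real.sin (π * δ) / (π * δ) / (2 * t + Real.sin (π * δ) / (π * δ)) -
        (Real.sin (π * δ) / (π * δ) / (t + Real.sin (π * δ) / (π * δ))) ^ 2)) := by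
  obtain ⟨hδ₀, hδ₁⟩ := hδ
  have hsinc : 0 < sin (π * δ) / (π * δ) :=
    div_pos (sin_pos_of_pos_of_lt_pi (by positivity) (by nlinarith [pi_pos])) (by positivity)
  refine (tendsto_variance_of_tendsto ht.le hsinc (tendsto_mul_A hδ₀ hδ₁ ht hA)
    (tendsto_sq_mul_B hδ₀ (by linarith) ht hB)).congr fun p => ?_
  simp only [one_div, mul_assoc]
end
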